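/- arXiv:0802.0130 — 2 statements merged into one kernel-verified Lean document; each statement's English description precedes it below -/
import Mathlib

section
/- Let n ≥ 1 and 0 ≤ m ≤ n-1. For the 2n-dimensional Euler–Lagrange error system ėₖ = eₖ₊₁ (1 ≤ k ≤ n-1), ėₙ = -(1/2)λₙ - a·tᵐ/m!, λ̇₁ = -2e₁, λ̇ₖ = -λₖ₋₁ (2 ≤ k ≤ n), there exists a solution in which e₁ ≡ 0 and all eₖ ≡ 0; i.e., an n-th order smoother tracks a polynomial input of degree up to n-1 beyond the model order with zero steady-state error. -/
/-!
If all errors vanish, `eₙ' = 0` forces `λₙ = -2u` for the forcing `u(t) = a tᵐ/m!`, and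
`λₖ' = -λₖ₋₁` then forces `λₖ = -2 (-1)^(n-k) u^(n-k)`. The one remaining equation,
`λ₁' = -2e₁ = 0`, says `u^(n) = 0`, which holds because `u` is a polynomial of degree `m < n`.
-/

open scoped ContDiff

section IteratedDeriv

variable {𝕜 F : Type*} [NontriviallyNormedField 𝕜] [NormedAddCommGroup F] [NormedSpace 𝕜 F]

theorem hasDerivAt_iteratedDeriv {f : 𝕜 → F} (hf : ContDiff 𝕜 ∞ f) (j : ℕ) (x : 𝕜) :
    HasDerivAt (iteratedDeriv j f) (iteratedDeriv (j + 1) f x) x := by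
  rw [iteratedDeriv_succ]
  exact (hf.differentiable_iteratedDeriv j (by exact_mod_cast ENat.natCast_lt_top j))
    |>.differentiableAt.hasDerivAt

theorem iteratedDeriv_eq_zero_of_le {f : 𝕜 → F} {n j : ℕ} (hf : iteratedDeriv n f = 0)
    (hnj : n ≤ j) : iteratedDeriv j f = 0 := by
  induction hnj with
  | refl => exact hf
  | step _ ih => rw [iteratedDeriv_succ, ih]; exact deriv_const' 0

end IteratedDeriv

noncomputable def zeroErrorCostate (n : ℕ) (u : ℝ → ℝ) (k : ℕ) (t : ℝ) : ℝ :=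
  -2 * (-1) ^ (n - k) * iteratedDeriv (n - k) u t

theorem hasDerivAt_zeroErrorCostate {u : ℝ → ℝ} (hu : ContDiff ℝ ∞ u) (n k : ℕ) (t : ℝ) :
    HasDerivAt (zeroErrorCostate n u k) (-2 * (-1) ^ (n - k) * iteratedDeriv (n - k + 1) u t) t :=
  (hasDerivAt_iteratedDeriv hu (n - k) t).const_mul _

theorem exists_solution_forall_error_eq_zero {n : ℕ} {u : ℝ → ℝ} (hu : ContDiff ℝ ∞ u)
    (hun : iteratedDeriv n u = 0) :
    ∃ e lam : ℕ → ℝ → ℝ,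
      (∀ k, 1 ≤ k → k ≤ n - 1 → ∀ t : ℝ, HasDerivAt (e k) (e (k + 1) t) t) ∧
      (∀ t : ℝ, HasDerivAt (e n) (-(1 / 2) * lam n t - u t) t) ∧
      (∀ t : ℝ, HasDerivAt (lam 1) (-2 * e 1 t) t) ∧
      (∀ k, 2 ≤ k → k ≤ n → ∀ t : ℝ, HasDerivAt (lam k) (-(lam (k - 1) t)) t) ∧
      (∀ k, 1 ≤ k → k ≤ n → ∀ t : ℝ, e k t = 0) := by
  refine ⟨fun _ _ => 0, zeroErrorCostate n u, fun _ _ _ t => hasDerivAt_const t 0,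
    fun t => ?_, fun t => ?_, fun k hk hkn t => ?_, fun _ _ _ _ => rfl⟩
  · refine (hasDerivAt_const t 0).congr_deriv ?_
    simp only [zeroErrorCostate, Nat.sub_self, pow_zero, iteratedDeriv_zero]
    ring
  · refine (hasDerivAt_zeroErrorCostate hu n 1 t).congr_deriv ?_
    rw [iteratedDeriv_eq_zero_of_le hun (by omega)]
    simp
  · refine (hasDerivAt_zeroErrorCostate hu n k t).congr_deriv ?_
    rw [zeroErrorCostate, show n - (k - 1) = n - k + 1 by omega, pow_succ]
    ring

/-- for 1 ≤ n and m ≤ n - 1, the 2n-dimensional EL error system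
admits a solution with all eₖ ≡ 0 (zero steady-state error). -/
theorem stmt3 (n m : ℕ) (hn : 1 ≤ n) (hm : m ≤ n - 1) (a : ℝ) :
    ∃ e lam : ℕ → ℝ → ℝ,
      (∀ k, 1 ≤ k → k ≤ n - 1 → ∀ t : ℝ, HasDerivAt (e k) (e (k+1) t) t) ∧
      (∀ t : ℝ, HasDerivAt (e n) (-(1/2) * lam n t - a * t^m / (Nat.factorial m)) t) ∧
      (∀ t : ℝ, HasDerivAt (lam 1) (-2 * e 1 t) t) ∧
      (∀ k, 2 ≤ k → k ≤ n → ∀ t : ℝ, HasDerivAt (lam k) (-(lam (k-1) t)) t) ∧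
      (∀ k, 1 ≤ k → k ≤ n → ∀ t : ℝ, e k t = 0) := by
  refine exists_solution_forall_error_eq_zero (u := fun t => a * t ^ m / m.factorial)
    (by fun_prop) (funext fun t => ?_)
  simp [Nat.descFactorial_eq_zero_iff_lt.mpr (show m < n by omega)]
end

section
/- Let n ≥ 1 and m > n with a ≠ 0. For the Euler–Lagrange error system ėₖ = eₖ₊₁ (1 ≤ k ≤ n-1), ėₙ = -(1/2)λₙ - a·tᵐ/m!, λ̇₁ = -2e₁, λ̇ₖ = -λₖ₋₁ (2 ≤ k ≤ n), there is no solution in which all eₖ are constant. -/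
/-!
Constancy of `eₙ` forces `λₙ` to be the monomial `-2a tᵐ / m!` on `(0, ∞)`. Each equation
`λ̇ₖ = -λₖ₋₁` then lowers the degree by one, so `λ₁` is a nonzero monomial of degree
`m - n + 1 ≥ 2`, and `λ̇₁ = -2e₁` makes `e₁` a nonzero monomial of positive degree, which is
not constant.
-/

open Filter Topology Nat

def IsMonomialOnIoi (f : ℝ → ℝ) (p : ℕ) : Prop :=
  ∃ c ≠ 0, ∀ t, 0 < t → f t = c * t ^ p

lemma HasDerivAt.eq_of_eqOn_Ioi_monomial {f : ℝ → ℝ} {c f' t : ℝ} {p : ℕ}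
    (hd : HasDerivAt f f' t) (hf : ∀ s, 0 < s → f s = c * s ^ p) (ht : 0 < t) :
    f' = c * (p * t ^ (p - 1)) := by
  have heq : f =ᶠ[𝓝 t] fun s => c * s ^ p := eventually_of_mem (isOpen_Ioi.mem_nhds ht) hf
  exact hd.unique (((hasDerivAt_pow p t).const_mul c).congr_of_eventuallyEq heq)

namespace IsMonomialOnIoi

lemma of_hasDerivAt {f g : ℝ → ℝ} {p : ℕ} {r : ℝ} (hf : IsMonomialOnIoi f (p + 1))
    (hr : r ≠ 0) (hd : ∀ t, 0 < t → HasDerivAt f (r * g t) t) : IsMonomialOnIoi g p := by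
  obtain ⟨c, hc, hfc⟩ := hf
  refine ⟨c * (p + 1) / r, div_ne_zero (mul_ne_zero hc (by positivity)) hr, fun t ht => ?_⟩
  have h := (hd t ht).eq_of_eqOn_Ioi_monomial hfc ht
  push_cast at h
  field_simp
  linear_combination h

lemma of_hasDerivAt_chain {f : ℕ → ℝ → ℝ} {p : ℕ} :
    ∀ {n : ℕ}, IsMonomialOnIoi (f n) (p + n) →
      (∀ k < n, ∀ t, 0 < t → HasDerivAt (f (k + 1)) (-f k t) t) → IsMonomialOnIoi (f 0) p
  | 0, hf, _ => hf
  | n + 1, hf, hd =>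
    have hfn : IsMonomialOnIoi (f n) (p + n) :=
      of_hasDerivAt hf (r := -1) (by norm_num) fun t ht => by
        simpa using hd n n.lt_succ_self t ht
    of_hasDerivAt_chain hfn fun k hk => hd k (hk.trans n.lt_succ_self)

lemma apply_one_ne_apply_two {f : ℝ → ℝ} {p : ℕ} (hf : IsMonomialOnIoi f p) (hp : p ≠ 0) :
    f 1 ≠ f 2 := by
  obtain ⟨c, hc, hfc⟩ := hf
  rw [hfc 1 one_pos, hfc 2 two_pos, one_pow, mul_one]
  intro h
  have : (1 : ℝ) < 2 ^ p := one_lt_pow₀ one_lt_two hp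
  exact hc (by nlinarith)

end IsMonomialOnIoi

theorem stmt5_general (n m : ℕ) (hn : 1 ≤ n) (hm : n < m) (a : ℝ) (ha : a ≠ 0)
    (e lam : ℕ → ℝ → ℝ)
    (hen : ∀ t : ℝ, 0 ≤ t →
      HasDerivAt (e n) (-(1/2) * lam n t - a * t^m / (Nat.factorial m)) t)
    (hl1 : ∀ t : ℝ, 0 ≤ t → HasDerivAt (lam 1) (-2 * e 1 t) t)
    (hlk : ∀ k, 2 ≤ k → k ≤ n → ∀ t : ℝ, 0 ≤ t → HasDerivAt (lam k) (-(lam (k-1) t)) t) :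
    ¬ (∀ k, 1 ≤ k → k ≤ n → ∀ t s : ℝ, 0 ≤ t → 0 ≤ s → e k t = e k s) := by
  intro hconst
  have hlam_n : IsMonomialOnIoi (lam n) m := by
    refine ⟨-2 * a / m !, div_ne_zero (mul_ne_zero (by norm_num) ha) (by positivity),
      fun t ht => ?_⟩
    have h := (hen t ht.le).eq_of_eqOn_Ioi_monomial (c := e n 1) (p := 0)
      (fun s hs => by simpa using hconst n hn le_rfl s 1 hs.le zero_le_one) ht
    simp only [CharP.cast_eq_zero, zero_mul, mul_zero] at h
    linear_combination (-2) * h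
  have hlam_1 : IsMonomialOnIoi (lam 1) (m - n + 1) :=
    IsMonomialOnIoi.of_hasDerivAt_chain (f := fun k => lam (k + 1)) (n := n - 1)
      (by convert hlam_n using 2 <;> omega)
      fun k hk t ht => hlk (k + 2) (by omega) (by omega) t ht.le
  have he_1 : IsMonomialOnIoi (e 1) (m - n) :=
    hlam_1.of_hasDerivAt (by norm_num) fun t ht => hl1 t ht.le
  exact he_1.apply_one_ne_apply_two (by omega) (hconst 1 le_rfl hn 1 2 zero_le_one zero_le_two)

/-- with m > n and a ≠ 0, the EL error system has no solution in
which all the eₖ are constant on [0,∞). -/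
theorem stmt5 (n m : ℕ) (hn : 1 ≤ n) (hm : n < m) (a : ℝ) (ha : a ≠ 0)
    (e lam : ℕ → ℝ → ℝ)
    (hchain : ∀ k, 1 ≤ k → k ≤ n - 1 → ∀ t : ℝ, 0 ≤ t → HasDerivAt (e k) (e (k+1) t) t)
    (hen : ∀ t : ℝ, 0 ≤ t →
      HasDerivAt (e n) (-(1/2) * lam n t - a * t^m / (Nat.factorial m)) t)
    (hl1 : ∀ t : ℝ, 0 ≤ t → HasDerivAt (lam 1) (-2 * e 1 t) t)
    (hlk : ∀ k, 2 ≤ k → k ≤ n → ∀ t : ℝ, 0 ≤ t → HasDerivAt (lam k) (-(lam (k-1) t)) t) :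
    ¬ (∀ k, 1 ≤ k → k ≤ n → ∀ t s : ℝ, 0 ≤ t → 0 ≤ s → e k t = e k s) :=
  stmt5_general n m hn hm a ha e lam hen hl1 hlk
end
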